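/- Let 0 < λ ≤ 1 with d_± = (1±√λ)², and let L_∞(z) = ∫_{d_−}^{d_+} p(x)/(z − x) dx where p is the Marčenko–Pastur density. There exist constants C₁, C₂, s₀ > 0 such that for all 0 < s < s₀: −C₂ s^{-1/2} ≤ L_∞'(d_+ + s) ≤ −C₁ s^{-1/2}. -/

import Mathlib

open Real

/-- The Marčenko–Pastur density with parameter `λ`. -/
noncomputable def pMP (l x : ℝ) : ℝ :=
  Real.sqrt (((1 + Real.sqrt l) ^ 2 - x) * (x - (1 - Real.sqrt l) ^ 2)) /
    (2 * Real.pi * l * x)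

/-!
Differentiating under the integral sign, `L_∞'(d₊ + s) = -∫ p(x) / (d₊ + s - x)² dx`.
Since `p(x) ≤ √(d₊ - x) / (2πλ√x)`, the integrand is dominated by a multiple of
`x^{-1/2} + (d₊ + s - x)^{-3/2}` (the first term handles the hard edge `d₋ = 0` when `λ = 1`,
the second the soft edge `d₊`), and both integrate to `O(s^{-1/2})`. Conversely `p(x) ≥ c √(d₊ - x)` near
`d₊`, so on `[d₊ - 2s, d₊ - s]` the integrand is at least a multiple of `√s / s²`, an interval of
length `s` contributing `≳ s^{-1/2}`.
-/

open MeasureTheory Set intervalIntegral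
open scoped Interval

section Calculus

variable {a b c : ℝ}

lemma inv_sqrt_eq_rpow {x : ℝ} (hx : 0 ≤ x) : (√x)⁻¹ = x ^ (-(1 : ℝ) / 2) := by
  rw [sqrt_eq_rpow, ← rpow_neg hx, neg_div]

lemma intervalIntegrable_inv_sqrt (ha : 0 ≤ a) (hb : 0 ≤ b) :
    IntervalIntegrable (fun x => (√x)⁻¹) volume a b :=
  (intervalIntegrable_rpow' (by norm_num)).congr fun x hx =>
    (inv_sqrt_eq_rpow ((le_min ha hb).trans (uIoc_subset_uIcc hx).1)).symm

lemma integral_inv_sqrt (ha : 0 ≤ a) (hb : 0 ≤ b) :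
    ∫ x in a..b, (√x)⁻¹ = 2 * (√b - √a) := by
  rw [integral_congr fun x hx => inv_sqrt_eq_rpow ((le_min ha hb).trans hx.1),
    integral_rpow (by norm_num), sqrt_eq_rpow, sqrt_eq_rpow]
  norm_num
  ring

lemma hasDerivAt_two_mul_inv_sqrt_sub {x : ℝ} (hx : x < c) :
    HasDerivAt (fun y => 2 * (√(c - y))⁻¹) ((c - x) * √(c - x))⁻¹ x := by
  have hcx : 0 < c - x := sub_pos.2 hx
  have hsqrt := ((hasDerivAt_id' x).const_sub c).sqrt hcx.ne'
  refine ((hsqrt.inv (sqrt_pos.2 hcx).ne').const_mul 2).congr_deriv ?_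
  field_simp
  rw [sq_sqrt hcx.le]

lemma intervalIntegrable_inv_mul_sqrt_sub (ha : a < c) (hb : b < c) :
    IntervalIntegrable (fun x => ((c - x) * √(c - x))⁻¹) volume a b := by
  refine ContinuousOn.intervalIntegrable fun x hx => ?_
  have hcx : 0 < c - x := sub_pos.2 (hx.2.trans_lt (max_lt ha hb))
  exact ((continuousAt_const.sub continuousAt_id).mul
    (continuous_sqrt.continuousAt.comp (continuousAt_const.sub continuousAt_id))).inv₀
    (mul_pos hcx (sqrt_pos.2 hcx)).ne' |>.continuousWithinAt

lemma integral_inv_mul_sqrt_sub (ha : a < c) (hb : b < c) :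
    ∫ x in a..b, ((c - x) * √(c - x))⁻¹ = 2 * ((√(c - b))⁻¹ - (√(c - a))⁻¹) := by
  rw [integral_eq_sub_of_hasDerivAt
    (fun x hx => hasDerivAt_two_mul_inv_sqrt_sub (hx.2.trans_lt (max_lt ha hb)))
    (intervalIntegrable_inv_mul_sqrt_sub ha hb)]
  ring

end Calculus

section StieltjesTransform

variable {f : ℝ → ℝ} {a b z : ℝ}

lemma IntervalIntegrable.div_sub_pow (hf : IntervalIntegrable f volume a b) (ha : a < z)
    (hb : b < z) (n : ℕ) : IntervalIntegrable (fun x => f x / (z - x) ^ n) volume a b := by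
  simp only [div_eq_mul_inv]
  refine hf.mul_continuousOn (ContinuousOn.inv₀ (by fun_prop) fun x hx => ?_)
  exact pow_ne_zero _ (sub_pos.2 (hx.2.trans_lt (max_lt ha hb))).ne'

lemma hasDerivAt_integral_div_sub (hf : IntervalIntegrable f volume a b) (ha : a < z)
    (hb : b < z) :
    HasDerivAt (fun w => ∫ x in a..b, f x / (w - x)) (-∫ x in a..b, f x / (z - x) ^ 2) z := by
  set ε := (z - max a b) / 2 with hε
  have hε0 : 0 < ε := by have := max_lt ha hb; linarith
  have hgap : ∀ x ∈ Ι a b, ∀ w ∈ Metric.ball z ε, ε ≤ w - x := fun x hx w hw => by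
    have hwz := (abs_lt.1 (mem_ball_iff_norm.1 hw)).1
    have hxb := (uIoc_subset_uIcc hx).2
    linarith
  have hmeas : ∀ w, AEStronglyMeasurable (fun x => f x / (w - x)) (volume.restrict (Ι a b)) :=
    fun w => hf.def'.aestronglyMeasurable.div₀ (by fun_prop)
  have key := hasDerivAt_integral_of_dominated_loc_of_deriv_le (bound := fun x => |f x| / ε ^ 2)
    (F' := fun w x => -(f x / (w - x) ^ 2)) (Metric.ball_mem_nhds z hε0)
    (Filter.Eventually.of_forall hmeas) (by simpa using hf.div_sub_pow ha hb 1)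
    (hf.def'.aestronglyMeasurable.div₀ (by fun_prop)).neg
    (Filter.Eventually.of_forall fun x hx w hw => ?_) (hf.abs.div_const _)
    (Filter.Eventually.of_forall fun x hx w hw => ?_)
  · simpa only [intervalIntegral.integral_neg] using key.2
  · have hwx := hgap x hx w hw
    rw [norm_neg, norm_div, norm_pow, Real.norm_eq_abs, Real.norm_eq_abs,
      abs_of_pos (show 0 < w - x by linarith)]
    gcongr
  · have hwx : w - x ≠ 0 := (hε0.trans_le (hgap x hx w hw)).ne'
    exact ((hasDerivAt_const w (f x)).div ((hasDerivAt_id' w).sub_const x) hwx).congr_deriv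
      (by ring)

end StieltjesTransform

section MarchenkoPastur

variable {l s x : ℝ}

lemma pMP_nonneg (hl : 0 < l) (hx : 0 ≤ x) : 0 ≤ pMP l x := by
  unfold pMP
  positivity

lemma pMP_le (hl : 0 < l) (hx : 0 < x) (hxd : x ≤ (1 + √l) ^ 2) :
    pMP l x ≤ √((1 + √l) ^ 2 - x) / (2 * π * l * √x) := by
  calc pMP l x ≤ √((1 + √l) ^ 2 - x) * √x / (2 * π * l * x) := by
        unfold pMP
        rw [← sqrt_mul (sub_nonneg.2 hxd)]
        gcongr
        nlinarith [sq_nonneg (1 - √l)]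
    _ = √((1 + √l) ^ 2 - x) / (2 * π * l * √x) := by
        field_simp
        rw [sq_sqrt hx.le, mul_comm]

lemma pMP_ge (hl0 : 0 < l) (hl1 : l ≤ 1) (hx : 1 ≤ x) (hxd : x ≤ (1 + √l) ^ 2) :
    √(√l) * √((1 + √l) ^ 2 - x) / (8 * π * l) ≤ pMP l x := by
  have hsl := sq_sqrt hl0.le
  have hgap : √l ≤ x - (1 - √l) ^ 2 := by nlinarith [sqrt_nonneg l]
  unfold pMP
  rw [← sqrt_mul (sqrt_nonneg l)]
  apply div_le_div₀ (sqrt_nonneg _) (sqrt_le_sqrt _) (by positivity)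
  · nlinarith [mul_pos pi_pos hl0]
  · rw [mul_comm]
    exact mul_le_mul_of_nonneg_left hgap (sub_nonneg.2 hxd)

lemma pMP_div_sq_le (hl0 : 0 < l) (hl1 : l ≤ 1) (hs : 0 < s) (hx : 0 < x)
    (hxd : x ≤ (1 + √l) ^ 2) :
    pMP l x / ((1 + √l) ^ 2 + s - x) ^ 2 ≤
      ((√x)⁻¹ / (2 * l) + (((1 + √l) ^ 2 + s - x) * √((1 + √l) ^ 2 + s - x))⁻¹) /
        (2 * π * l) := by
  have hp := pMP_le hl0 hx hxd
  have hsl := sq_sqrt hl0.le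
  set u := (1 + √l) ^ 2 + s - x with hu_def
  have hu : 0 < u := by linarith
  rcases le_or_gt x 1 with hx1 | hx1
  · -- away from the edge the denominator stays above `(2√l)²`
    have hu2 : 4 * l ≤ u ^ 2 := by nlinarith [sqrt_nonneg l]
    have hnum : √((1 + √l) ^ 2 - x) ≤ 2 := sqrt_le_iff.2 ⟨zero_le_two, by nlinarith⟩
    calc pMP l x / u ^ 2 ≤ 2 / (2 * π * l * √x) / (4 * l) := by
          apply div_le_div₀ (by positivity) (hp.trans (by gcongr)) (by positivity) hu2
      _ = (√x)⁻¹ / (2 * l) / (2 * π * l) := by field_simp; ring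
      _ ≤ _ := by gcongr; exact le_add_of_nonneg_right (by positivity)
  · -- near the edge `d₊`, where `√x ≥ 1`
    have hsx : 1 ≤ √x := one_le_sqrt.2 hx1.le
    have hsu : 0 < √u := sqrt_pos.2 hu
    calc pMP l x / u ^ 2 ≤ √u / (2 * π * l) / u ^ 2 := by
          gcongr
          refine hp.trans (div_le_div₀ (sqrt_nonneg _) (sqrt_le_sqrt (by linarith))
            (by positivity) (le_mul_of_one_le_right (by positivity) hsx))
      _ = (u * √u)⁻¹ / (2 * π * l) := by
          field_simp
          rw [sq_sqrt hu.le]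
      _ ≤ _ := by gcongr; exact le_add_of_nonneg_left (by positivity)

lemma le_pMP_div_sq (hl0 : 0 < l) (hl1 : l ≤ 1) (hs : 0 < s) (hsl : s ≤ l)
    (hx : x ∈ Icc ((1 + √l) ^ 2 - 2 * s) ((1 + √l) ^ 2 - s)) :
    √(√l) / (72 * π * l) * (s * √s)⁻¹ ≤ pMP l x / ((1 + √l) ^ 2 + s - x) ^ 2 := by
  have hsq := sq_sqrt hl0.le
  have hx1 : 1 ≤ x := by nlinarith [hx.1, sqrt_nonneg l]
  have hp : √(√l) * √s / (8 * π * l) ≤ pMP l x :=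
    le_trans (by gcongr; linarith [hx.2]) (pMP_ge hl0 hl1 hx1 (by linarith [hx.2]))
  calc √(√l) / (72 * π * l) * (s * √s)⁻¹ = √(√l) * √s / (8 * π * l) / (9 * s ^ 2) := by
        field_simp
        rw [sq_sqrt hs.le]
        ring
    _ ≤ pMP l x / ((1 + √l) ^ 2 + s - x) ^ 2 :=
        div_le_div₀ (pMP_nonneg hl0 (by linarith)) hp (by nlinarith [hx.2])
          (by nlinarith [hx.1, hx.2])

lemma intervalIntegrable_pMP (hl : 0 < l) :
    IntervalIntegrable (pMP l) volume ((1 - √l) ^ 2) ((1 + √l) ^ 2) := by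
  refine ((intervalIntegrable_inv_sqrt (sq_nonneg _) (sq_nonneg _)).const_mul
    ((1 + √l) / (2 * π * l))).mono_fun'
    (by unfold pMP; fun_prop : Measurable (pMP l)).aestronglyMeasurable ?_
  rw [uIoc_of_le (by nlinarith [sqrt_nonneg l])]
  filter_upwards [ae_restrict_mem measurableSet_Ioc] with x hx
  have hx0 : 0 < x := (sq_nonneg _).trans_lt hx.1
  rw [norm_of_nonneg (pMP_nonneg hl hx0.le)]
  have hnum : √((1 + √l) ^ 2 - x) ≤ 1 + √l := sqrt_le_iff.2 ⟨by positivity, by linarith⟩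
  calc pMP l x ≤ √((1 + √l) ^ 2 - x) / (2 * π * l * √x) := pMP_le hl hx0 hx.2
    _ ≤ (1 + √l) / (2 * π * l * √x) := by gcongr
    _ = (1 + √l) / (2 * π * l) * (√x)⁻¹ := by ring

lemma integral_pMP_div_sq_le (hl0 : 0 < l) (hl1 : l ≤ 1) (hs : 0 < s) (hs1 : s ≤ 1) :
    ∫ x in (1 - √l) ^ 2..(1 + √l) ^ 2, pMP l x / ((1 + √l) ^ 2 + s - x) ^ 2 ≤
      (1 / l + 1) / (π * l) * (√s)⁻¹ := by
  have hsl1 : √l ≤ 1 := sqrt_le_one.2 hl1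
  have hdm : 0 ≤ (1 - √l) ^ 2 := sq_nonneg _
  have hdmp : (1 - √l) ^ 2 ≤ (1 + √l) ^ 2 := by nlinarith [sqrt_nonneg l]
  have hinv1 : 1 ≤ (√s)⁻¹ := one_le_inv₀ (sqrt_pos.2 hs) |>.2 (sqrt_le_one.2 hs1)
  have hint := (intervalIntegrable_pMP hl0).div_sub_pow (z := (1 + √l) ^ 2 + s)
    (by linarith) (by linarith) 2
  have hint_inv_sqrt := (intervalIntegrable_inv_sqrt hdm (sq_nonneg (1 + √l))).div_const (2 * l)
  have hint_edge := intervalIntegrable_inv_mul_sqrt_sub (c := (1 + √l) ^ 2 + s)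
    (a := (1 - √l) ^ 2) (b := (1 + √l) ^ 2) (by linarith) (by linarith)
  calc ∫ x in (1 - √l) ^ 2..(1 + √l) ^ 2, pMP l x / ((1 + √l) ^ 2 + s - x) ^ 2
      ≤ ∫ x in (1 - √l) ^ 2..(1 + √l) ^ 2,
          ((√x)⁻¹ / (2 * l) + (((1 + √l) ^ 2 + s - x) * √((1 + √l) ^ 2 + s - x))⁻¹) /
            (2 * π * l) :=
        integral_mono_on_of_le_Ioo hdmp hint ((hint_inv_sqrt.add hint_edge).div_const _)
          fun x hx => pMP_div_sq_le hl0 hl1 hs (hdm.trans_lt hx.1) hx.2.le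
    _ = (2 * (√((1 + √l) ^ 2) - √((1 - √l) ^ 2)) / (2 * l) +
          2 * ((√s)⁻¹ - (√((1 + √l) ^ 2 + s - (1 - √l) ^ 2))⁻¹)) / (2 * π * l) := by
        rw [intervalIntegral.integral_div, integral_add hint_inv_sqrt hint_edge,
          intervalIntegral.integral_div, integral_inv_sqrt hdm (sq_nonneg _),
          integral_inv_mul_sqrt_sub (by linarith) (by linarith), add_sub_cancel_left]
    _ ≤ (2 * 2 / (2 * l) + 2 * (√s)⁻¹) / (2 * π * l) := by
        rw [sqrt_sq (by positivity)]
        gcongr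
        · linarith [sqrt_nonneg ((1 - √l) ^ 2)]
        · linarith [inv_nonneg.2 (sqrt_nonneg ((1 + √l) ^ 2 + s - (1 - √l) ^ 2))]
    _ = (1 / l + (√s)⁻¹) / (π * l) := by field_simp
    _ ≤ (1 / l * (√s)⁻¹ + (√s)⁻¹) / (π * l) := by
        gcongr
        exact le_mul_of_one_le_right (by positivity) hinv1
    _ = (1 / l + 1) / (π * l) * (√s)⁻¹ := by ring

lemma le_integral_pMP_div_sq (hl0 : 0 < l) (hl1 : l ≤ 1) (hs : 0 < s) (hsl : s ≤ l) :
    √(√l) / (72 * π * l) * (√s)⁻¹ ≤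
      ∫ x in (1 - √l) ^ 2..(1 + √l) ^ 2, pMP l x / ((1 + √l) ^ 2 + s - x) ^ 2 := by
  have hsq := sq_sqrt hl0.le
  have hdm : 0 ≤ (1 - √l) ^ 2 := sq_nonneg _
  have hdm2s : (1 - √l) ^ 2 ≤ (1 + √l) ^ 2 - 2 * s := by nlinarith [sqrt_nonneg l]
  have hint := (intervalIntegrable_pMP hl0).div_sub_pow (z := (1 + √l) ^ 2 + s)
    (by linarith) (by linarith) 2
  calc √(√l) / (72 * π * l) * (√s)⁻¹
      = ∫ _ in (1 + √l) ^ 2 - 2 * s..(1 + √l) ^ 2 - s, √(√l) / (72 * π * l) * (s * √s)⁻¹ := by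
        rw [intervalIntegral.integral_const, smul_eq_mul]
        field_simp
        ring
    _ ≤ ∫ x in (1 + √l) ^ 2 - 2 * s..(1 + √l) ^ 2 - s, pMP l x / ((1 + √l) ^ 2 + s - x) ^ 2 :=
        integral_mono_on (by linarith) intervalIntegrable_const
          (hint.mono_set (by
            rw [uIcc_of_le (by linarith), uIcc_of_le (by linarith)]
            exact Icc_subset_Icc hdm2s (by linarith)))
          fun x hx => le_pMP_div_sq hl0 hl1 hs hsl hx
    _ ≤ ∫ x in (1 - √l) ^ 2..(1 + √l) ^ 2, pMP l x / ((1 + √l) ^ 2 + s - x) ^ 2 :=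
        integral_mono_interval hdm2s (by linarith) (by linarith)
          ((ae_restrict_mem measurableSet_Ioc).mono fun x hx =>
            div_nonneg (pMP_nonneg hl0 (hdm.trans hx.1.le)) (sq_nonneg _))
          hint

end MarchenkoPastur

theorem mp_stieltjes_deriv_bounds (l : ℝ) (hl0 : 0 < l) (hl1 : l ≤ 1) :
    ∃ C₁ C₂ s₀ : ℝ, 0 < C₁ ∧ 0 < C₂ ∧ 0 < s₀ ∧ ∀ s : ℝ, 0 < s → s < s₀ →
      (-C₂ * s ^ (-(1 : ℝ) / 2) ≤
        deriv (fun t : ℝ =>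
          ∫ x in ((1 - Real.sqrt l) ^ 2)..((1 + Real.sqrt l) ^ 2),
            pMP l x / ((1 + Real.sqrt l) ^ 2 + t - x)) s) ∧
      (deriv (fun t : ℝ =>
          ∫ x in ((1 - Real.sqrt l) ^ 2)..((1 + Real.sqrt l) ^ 2),
            pMP l x / ((1 + Real.sqrt l) ^ 2 + t - x)) s ≤
        -C₁ * s ^ (-(1 : ℝ) / 2)) := by
  refine ⟨√(√l) / (72 * π * l), (1 / l + 1) / (π * l), l, by positivity, by positivity, hl0,
    fun s hs hsl => ?_⟩
  have hderiv : HasDerivAt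
      (fun t => ∫ x in (1 - √l) ^ 2..(1 + √l) ^ 2, pMP l x / ((1 + √l) ^ 2 + t - x))
      (-∫ x in (1 - √l) ^ 2..(1 + √l) ^ 2, pMP l x / ((1 + √l) ^ 2 + s - x) ^ 2) s :=
    (hasDerivAt_integral_div_sub (intervalIntegrable_pMP hl0) (by nlinarith [sqrt_nonneg l])
      (by linarith)).comp_const_add _ s
  rw [hderiv.deriv, ← inv_sqrt_eq_rpow hs.le]
  have hupper := integral_pMP_div_sq_le hl0 hl1 hs (hsl.le.trans hl1)
  have hlower := le_integral_pMP_div_sq hl0 hl1 hs hsl.le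
  constructor <;> linarith
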